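/- Let G be an amenable group with left Haar measure dg and let {T_g : E → E}_{g∈G} be a family of continuous linear operators of a reflexive Banach space E into itself satisfying: (1) T_g T_h = T_{hg} for all g,h ∈ G; (2) for every x ∈ E and y* ∈ E*, the map g ↦ ⟨T_g x, y*⟩ is Borel measurable on G; (3) there is β such that ‖T_g‖ ≤ β for Haar-a.e. g ∈ G. For a compact K ⊆ G with |K| > 0, let A(K,x) ∈ E be the Pettis integral determined by ⟨A(K,x), y*⟩ = (1/|K|) ∫_K ⟨T_g x, y*⟩ dg for all y* ∈ E*. Set F = {x ∈ E : T_g x = x for all g ∈ G} and N = the norm closure of the span of {x − T_g x : x ∈ E, g ∈ G}. Then E = F ⊕ N, and for every Følner net {F_θ : θ ∈ Θ} in G and every x ∈ E, A(F_θ, x) converges in norm (Moore–Smith limit) to P(x), where P : F ⊕ N → F is the projection onto F along N and ‖P‖ ≤ β. -/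

import Mathlib

open Filter Topology ENNReal
open scoped symmDiff Pointwise

/-- A (left) Følner net in a locally compact group `G` with left Haar measure `μG`:
a net of compact sets of positive Haar measure which is asymptotically invariant
under every left translation (in the sense of Moore–Smith limits). -/
def IsFolnerNet {G : Type} [Group G] [TopologicalSpace G] [MeasurableSpace G]
    (μG : MeasureTheory.Measure G) {Θ : Type} [Preorder Θ] (F : Θ → Set G) : Prop :=
  (∀ θ, IsCompact (F θ)) ∧ (∀ θ, 0 < μG (F θ)) ∧
    ∀ g : G, Tendsto (fun θ => (μG ((g • F θ) ∆ (F θ))).toReal / (μG (F θ)).toReal)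
      atTop (𝓝 0)

/-- A bundled Følner net (a directed nonempty index set together with the net). -/
structure FolnerNet {G : Type} [Group G] [TopologicalSpace G] [MeasurableSpace G]
    (μG : MeasureTheory.Measure G) where
  ι : Type
  [pre : Preorder ι]
  [ne : Nonempty ι]
  [dir : IsDirected ι (· ≤ ·)]
  F : ι → Set G
  isFolner : IsFolnerNet μG F

/-- A directed (nonempty) index type, used as the index of a subnet. -/
structure DirIndex where
  ι : Type
  [pre : Preorder ι]
  [ne : Nonempty ι]
  [dir : IsDirected ι (· ≤ ·)]

attribute [instance] DirIndex.pre DirIndex.ne DirIndex.dir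
attribute [instance] FolnerNet.pre FolnerNet.ne FolnerNet.dir

/-- A Borel action of a group `G` on a measurable space `X`: a jointly measurable
map `G × X → X` satisfying the action laws. -/
structure IsBorelAction (G : Type) [Group G] [MeasurableSpace G]
    {X : Type} [MeasurableSpace X] (T : G → X → X) : Prop where
  measurable : Measurable fun p : G × X => T p.1 p.2
  one_act : ∀ x, T 1 x = x
  mul_act : ∀ g h x, T g (T h x) = T (g * h) x

open MeasureTheory

/-- Membership in `L∞(X, 𝒳)`: bounded measurable real-valued functions. -/
def MemLinf {X : Type} [MeasurableSpace X] (φ : X → ℝ) : Prop :=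
  Measurable φ ∧ ∃ C : ℝ, ∀ x, |φ x| ≤ C

/-- The ergodic average `A(K, φ)(x) = (1/|K|) ∫_K φ(T_g x) dg`. -/
noncomputable def ergAvg {G X : Type} [MeasurableSpace G] (μG : Measure G)
    (T : G → X → X) (K : Set G) (φ : X → ℝ) (x : X) : ℝ :=
  (μG K).toReal⁻¹ * ∫ g in K, φ (T g x) ∂μG

/-- The σ-algebra `𝒳_{G,μ}` of μ-almost invariant measurable sets. -/
def invSigmaAE {G X : Type} [MeasurableSpace X] (T : G → X → X) (μ : Measure X) :
    MeasurableSpace X where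
  MeasurableSet' B := MeasurableSet B ∧ ∀ g : G, μ ((T g ⁻¹' B) ∆ B) = 0
  measurableSet_empty := ⟨MeasurableSet.empty, fun g => by simp⟩
  measurableSet_compl := fun B hB => ⟨hB.1.compl, fun g => by
    have h := hB.2 g
    rw [Set.preimage_compl, compl_symmDiff_compl]
    exact h⟩
  measurableSet_iUnion := fun f hf => ⟨MeasurableSet.iUnion fun n => (hf n).1, fun g => by
    have hsub : ((T g ⁻¹' ⋃ n, f n) ∆ (⋃ n, f n)) ⊆ ⋃ n, ((T g ⁻¹' f n) ∆ (f n)) := by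
      intro x hx
      rw [Set.mem_symmDiff] at hx
      rw [Set.preimage_iUnion] at hx
      rcases hx with ⟨hx1, hx2⟩ | ⟨hx1, hx2⟩
      · obtain ⟨n, hn⟩ := Set.mem_iUnion.1 hx1
        exact Set.mem_iUnion.2 ⟨n, Set.mem_symmDiff.2
          (Or.inl ⟨hn, fun h => hx2 (Set.mem_iUnion.2 ⟨n, h⟩)⟩)⟩
      · obtain ⟨n, hn⟩ := Set.mem_iUnion.1 hx1
        exact Set.mem_iUnion.2 ⟨n, Set.mem_symmDiff.2
          (Or.inr ⟨hn, fun h => hx2 (Set.mem_iUnion.2 ⟨n, h⟩)⟩)⟩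
    refine le_antisymm ?_ (zero_le ..)
    calc μ ((T g ⁻¹' ⋃ n, f n) ∆ (⋃ n, f n)) ≤ μ (⋃ n, ((T g ⁻¹' f n) ∆ (f n))) :=
          measure_mono hsub
      _ ≤ ∑' n, μ ((T g ⁻¹' f n) ∆ (f n)) := measure_iUnion_le _
      _ = 0 := by simp [fun n => (hf n).2 g]⟩

/-- The σ-algebra `𝒳_G` of strictly `G`-invariant measurable sets. -/
def invSigma {G X : Type} [MeasurableSpace X] (T : G → X → X) :
    MeasurableSpace X where
  MeasurableSet' B := MeasurableSet B ∧ ∀ g : G, T g ⁻¹' B = B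
  measurableSet_empty := ⟨MeasurableSet.empty, fun g => by simp⟩
  measurableSet_compl := fun B hB => ⟨hB.1.compl, fun g => by
    rw [Set.preimage_compl, hB.2 g]⟩
  measurableSet_iUnion := fun f hf => ⟨MeasurableSet.iUnion fun n => (hf n).1, fun g => by
    rw [Set.preimage_iUnion]
    exact Set.iUnion_congr fun n => (hf n).2 g⟩

open NormedSpace
section AuxMeasureLemmas

open Set

variable {G : Type} [Group G] [TopologicalSpace G] [IsTopologicalGroup G] [LocallyCompactSpace G]
    [T2Space G] [MeasurableSpace G] [BorelSpace G]

/-- For a regular Haar measure, a compact set whose inverse is null is null. -/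
private lemma haar_compact_null_of_inv_null (μ : MeasureTheory.Measure G) [μ.IsHaarMeasure]
    [μ.Regular] {K : Set G} (hK : IsCompact K) (h0 : μ K⁻¹ = 0) : μ K = 0 := by
  rcases K.eq_empty_or_nonempty with rfl | hKne
  · simp
  set ν : Measure G := μ.inv with hν
  have hνK : ν K = 0 := by rw [hν, Measure.inv_apply]; exact h0
  obtain ⟨gf, gf_one, -, gf_supp, gf_mem⟩ :=
    exists_continuous_one_zero_of_isCompact (isCompact_singleton (x := (1 : G)))
      isClosed_empty (disjoint_empty _)
  have gf_nonneg : 0 ≤ (gf : G → ℝ) := fun x => (gf_mem x).1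
  have gf_pos : (gf : G → ℝ) 1 ≠ 0 := by
    have : (gf : G → ℝ) 1 = 1 := gf_one rfl
    simp [this]
  set D : G → ℝ := fun y => ∫ z, gf (z⁻¹ * y) ∂ν with hD
  have D_cont : Continuous D := continuous_integral_apply_inv_mul gf.continuous gf_supp
  have D_pos : ∀ x, 0 < D x := by
    intro x
    have C : Continuous fun y => (gf : G → ℝ) (y⁻¹ * x) :=
      gf.continuous.comp (continuous_inv.mul continuous_const)
    apply (integral_pos_iff_support_of_nonneg (fun y => gf_nonneg (y⁻¹ * x)) _).2
    · apply C.isOpen_support.measure_pos ν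
      exact ⟨x, by simpa using gf_pos⟩
    · apply C.integrable_of_hasCompactSupport
      exact gf_supp.comp_homeomorph ((Homeomorph.inv G).trans (Homeomorph.mulRight x))
  obtain ⟨L, L_comp, hKL⟩ := exists_compact_superset hK
  have L_ne : L.Nonempty := hKne.mono (hKL.trans interior_subset)
  obtain ⟨z₀, -, hz₀⟩ := L_comp.exists_isMinOn L_ne D_cont.continuousOn
  set δ : ℝ := D z₀ with hδ
  have δ_pos : 0 < δ := D_pos z₀
  have g_int : Integrable (gf : G → ℝ) μ := gf.continuous.integrable_of_hasCompactSupport gf_supp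
  set Cg : ℝ := ∫ x, gf x ∂μ with hCg
  have Cg_nonneg : 0 ≤ Cg := integral_nonneg gf_nonneg
  have main : ∀ ε : ℝ, 0 < ε → (μ K).toReal ≤ δ⁻¹ * ε * Cg := by
    intro ε εpos
    obtain ⟨U, hKU, U_open, hU⟩ : ∃ U ⊇ K, IsOpen U ∧ ν U < ENNReal.ofReal ε :=
      K.exists_isOpen_lt_of_lt (ENNReal.ofReal ε) (by rw [hνK]; simp [εpos])
    set V : Set G := U ∩ interior L with hV
    have V_open : IsOpen V := U_open.inter isOpen_interior
    have hKV : K ⊆ V := Set.subset_inter hKU hKL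
    have hVL : V ⊆ L := Set.inter_subset_right.trans interior_subset
    have hνV : ν V < ENNReal.ofReal ε := lt_of_le_of_lt (measure_mono Set.inter_subset_left) hU
    obtain ⟨f, f_one, f_zero, f_supp, f_mem⟩ :=
      exists_continuous_one_zero_of_isCompact hK V_open.isClosed_compl
        (disjoint_compl_right_iff_subset.2 hKV)
    have f_nonneg : 0 ≤ (f : G → ℝ) := fun x => (f_mem x).1
    have f_int : Integrable (f : G → ℝ) μ := f.continuous.integrable_of_hasCompactSupport f_supp
    have combo := Measure.integral_isMulLeftInvariant_isMulRightInvariant_combo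
      (μ := μ) (ν := ν) f.continuous f_supp gf.continuous gf_supp gf_nonneg gf_pos
    have LHS : (μ K).toReal ≤ ∫ x, f x ∂μ := by
      have : (μ K).toReal = ∫ x in K, (1 : ℝ) ∂μ := by
        simp [setIntegral_const, Measure.real]
      rw [this]
      rw [← integral_indicator hK.measurableSet]
      apply integral_mono _ f_int
      · intro x
        by_cases hx : x ∈ K
        · simp only [Set.indicator_of_mem hx]
          exact le_of_eq (f_one hx).symm
        · simp only [Set.indicator_of_notMem hx]
          exact f_nonneg x
      · exact (integrable_indicator_iff hK.measurableSet).2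
          (integrableOn_const hK.measure_lt_top.ne)
    have RHS : ∫ y, f y * (D y)⁻¹ ∂ν ≤ δ⁻¹ * ε := by
      have veq : ∫ y, f y * (D y)⁻¹ ∂ν = ∫ y in V, f y * (D y)⁻¹ ∂ν := by
        rw [setIntegral_eq_integral_of_forall_compl_eq_zero]
        intro x hx
        simp [f_zero hx]
      rw [veq]
      have habs : ∫ y in V, f y * (D y)⁻¹ ∂ν ≤ ‖∫ y in V, f y * (D y)⁻¹ ∂ν‖ := le_abs_self _
      refine habs.trans (le_trans (norm_setIntegral_le_of_norm_le_const_ae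
        (lt_of_lt_of_le hνV le_top) (C := δ⁻¹) ?_) ?_)
      · apply ae_restrict_of_forall_mem V_open.measurableSet
        intro y hy
        have hDy : δ ≤ D y := hz₀ (hVL hy)
        have h1 : f y * (D y)⁻¹ ≤ δ⁻¹ := by
          calc f y * (D y)⁻¹ ≤ 1 * (D y)⁻¹ := by
                apply mul_le_mul_of_nonneg_right (f_mem y).2
                exact le_of_lt (inv_pos.2 (D_pos y))
            _ = (D y)⁻¹ := one_mul _
            _ ≤ δ⁻¹ := by
                apply inv_anti₀ δ_pos hDy
        have h2 : 0 ≤ f y * (D y)⁻¹ :=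
          mul_nonneg (f_nonneg y) (le_of_lt (inv_pos.2 (D_pos y)))
        rw [Real.norm_eq_abs, abs_of_nonneg h2]
        exact h1
      · have : (ν V).toReal ≤ ε := by
          rw [← ENNReal.ofReal_toReal (lt_of_lt_of_le hνV le_top).ne] at hνV
          exact le_of_lt ((ENNReal.ofReal_lt_ofReal_iff εpos).1 hνV)
        exact mul_le_mul_of_nonneg_left this (le_of_lt (inv_pos.2 δ_pos))
    calc (μ K).toReal ≤ ∫ x, f x ∂μ := LHS
      _ = (∫ y, f y * (D y)⁻¹ ∂ν) * Cg := combo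
      _ ≤ (δ⁻¹ * ε) * Cg := mul_le_mul_of_nonneg_right RHS Cg_nonneg
      _ = δ⁻¹ * ε * Cg := by ring
  have toReal0 : (μ K).toReal ≤ 0 := by
    by_contra hpos
    push_neg at hpos
    set t : ℝ := (μ K).toReal with ht
    rcases eq_or_lt_of_le Cg_nonneg with hC | hC
    · have h1 := main 1 one_pos
      rw [← hC] at h1
      simp only [mul_zero] at h1
      linarith
    · have h2 := main (t * δ / (2 * Cg)) (by positivity)
      have : δ⁻¹ * (t * δ / (2 * Cg)) * Cg = t / 2 := by
        field_simp
      rw [this] at h2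
      linarith
  have : (μ K).toReal = 0 := le_antisymm toReal0 ENNReal.toReal_nonneg
  exact (ENNReal.toReal_eq_zero_iff _).1 this |>.resolve_right (by simp [hK.measure_lt_top.ne])

/-- Inversion sends null sets to locally null sets, for any Haar measure. -/
private lemma haar_inv_null (μ : MeasureTheory.Measure G) [μ.IsHaarMeasure]
    {Z : Set G} (hZm : MeasurableSet Z) (hZ : μ Z = 0)
    {C : Set G} (hC : IsCompact C) : μ (Z⁻¹ ∩ C) = 0 := by
  have : Nonempty G := ⟨1⟩
  let K₀ : TopologicalSpace.PositiveCompacts G := Classical.arbitrary _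
  set μ₀ : Measure G := Measure.haarMeasure K₀ with hμ₀
  set c : NNReal := μ.haarScalarFactor μ₀ with hc
  have c_pos : 0 < c := Measure.haarScalarFactor_pos_of_isHaarMeasure μ μ₀
  have cmp : ∀ s : Set G, IsCompact (closure s) → μ s = c • μ₀ s := fun s hs =>
    Measure.measure_isMulInvariant_eq_smul_of_isCompact_closure μ μ₀ hs
  set W : Set G := Z ∩ C⁻¹ with hW
  have hCinv : IsCompact (C⁻¹ : Set G) := hC.inv
  have hWc : IsCompact (closure W) :=
    hCinv.of_isClosed_subset isClosed_closure
      (closure_minimal inter_subset_right hCinv.isClosed)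
  have hμW : μ W = 0 := le_antisymm (hZ ▸ measure_mono inter_subset_left) (zero_le ..)
  have hμ₀W : μ₀ W = 0 := by
    have h1 := cmp W hWc
    rw [hμW] at h1
    have h2 := h1.symm
    rwa [smul_eq_zero, or_iff_right (by exact_mod_cast c_pos.ne')] at h2
  have hWinv : W⁻¹ = Z⁻¹ ∩ C := by
    rw [hW, Set.inter_inv, inv_inv]
  have hWinv_meas : MeasurableSet (W⁻¹ : Set G) := by
    rw [hWinv]; exact hZm.inv.inter hC.measurableSet
  have hWinv_fin : μ₀ W⁻¹ ≠ ∞ := by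
    have : μ₀ W⁻¹ ≤ μ₀ C := by
      apply measure_mono; rw [hWinv]; exact inter_subset_right
    exact (lt_of_le_of_lt this hC.measure_lt_top).ne
  have hμ₀Winv : μ₀ W⁻¹ = 0 := by
    refine le_antisymm ?_ (zero_le ..)
    refine ENNReal.le_of_forall_pos_le_add fun ε εpos _ => ?_
    obtain ⟨K, hKW, hKcomp, hKlt⟩ :=
      hWinv_meas.exists_isCompact_lt_add (μ := μ₀) hWinv_fin
        (ε := ε) (by exact_mod_cast εpos.ne')
    have hKnull : μ₀ K = 0 := by
      apply haar_compact_null_of_inv_null μ₀ hKcomp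
      refine le_antisymm ?_ (zero_le ..)
      calc μ₀ K⁻¹ ≤ μ₀ W := measure_mono (by
            intro x hx
            simpa using Set.inv_subset.2 hKW hx)
        _ = 0 := hμ₀W
    rw [hKnull, zero_add] at hKlt
    simpa using hKlt.le
  have hclos : IsCompact (closure (W⁻¹ : Set G)) :=
    hC.of_isClosed_subset isClosed_closure
      (closure_minimal (hWinv ▸ inter_subset_right) hC.isClosed)
  calc μ (Z⁻¹ ∩ C) = μ W⁻¹ := by rw [hWinv]
    _ = c • μ₀ W⁻¹ := cmp _ hclos
    _ = 0 := by rw [hμ₀Winv]; simp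

/-- Translation of set integrals under the left action. -/
private lemma setIntegral_translate (μ : MeasureTheory.Measure G) [μ.IsMulLeftInvariant]
    {A : Set G} (hA : MeasurableSet A) (f : G → ℝ) (h : G) :
    ∫ g in A, f (h * g) ∂μ = ∫ g in h • A, f g ∂μ := by
  have hhA : MeasurableSet (h • A) := hA.const_smul h
  rw [← integral_indicator hA, ← integral_indicator hhA]
  have key : ∀ g : G, A.indicator (fun g' => f (h * g')) g = (h • A).indicator f (h * g) := by
    intro g
    by_cases hg : g ∈ A
    · rw [indicator_of_mem hg, indicator_of_mem]
      exact ⟨g, hg, rfl⟩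
    · rw [indicator_of_notMem hg, indicator_of_notMem]
      intro hmem
      apply hg
      have := Set.mem_smul_set_iff_inv_smul_mem.1 hmem
      simpa using this
  calc ∫ g, A.indicator (fun g' => f (h * g')) g ∂μ
      = ∫ g, (h • A).indicator f (h * g) ∂μ := by
        congr 1; exact funext key
    _ = ∫ g, (h • A).indicator f g ∂μ := integral_mul_left_eq_self _ h

/-- Quantitative comparison of set integrals over two sets. -/
private lemma abs_setIntegral_sub_le (μ : MeasureTheory.Measure G) {A B : Set G}
    (hAm : MeasurableSet A) (hBm : MeasurableSet B) (hAf : μ A ≠ ∞) (hBf : μ B ≠ ∞)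
    {f : G → ℝ} {c : ℝ} (hf : Measurable f)
    (hbd : ∀ᵐ g ∂μ.restrict (A ∪ B), ‖f g‖ ≤ c) :
    ‖(∫ g in A, f g ∂μ) - ∫ g in B, f g ∂μ‖ ≤ c * (μ (A ∆ B)).toReal := by
  have hbdA : ∀ᵐ g ∂μ.restrict A, ‖f g‖ ≤ c :=
    ae_restrict_of_ae_restrict_of_subset Set.subset_union_left hbd
  have hbdB : ∀ᵐ g ∂μ.restrict B, ‖f g‖ ≤ c :=
    ae_restrict_of_ae_restrict_of_subset Set.subset_union_right hbd
  have hbdAB : ∀ᵐ g ∂μ.restrict (A \ B), ‖f g‖ ≤ c :=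
    ae_restrict_of_ae_restrict_of_subset Set.diff_subset hbdA
  have hbdBA : ∀ᵐ g ∂μ.restrict (B \ A), ‖f g‖ ≤ c :=
    ae_restrict_of_ae_restrict_of_subset Set.diff_subset hbdB
  have hintA : IntegrableOn f A μ :=
    Measure.integrableOn_of_bounded hAf hf.aestronglyMeasurable hbdA
  have hintB : IntegrableOn f B μ :=
    Measure.integrableOn_of_bounded hBf hf.aestronglyMeasurable hbdB
  have eA := integral_inter_add_diff (μ := μ) (s := A) (t := B) hBm hintA
  have eB := integral_inter_add_diff (μ := μ) (s := B) (t := A) hAm hintB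
  rw [Set.inter_comm B A] at eB
  have hsplit : (∫ g in A, f g ∂μ) - ∫ g in B, f g ∂μ
      = (∫ g in A \ B, f g ∂μ) - ∫ g in B \ A, f g ∂μ := by
    rw [← eA, ← eB]; ring
  have hABfin : μ (A \ B) ≠ ∞ := ((measure_mono Set.diff_subset).trans_lt hAf.lt_top).ne
  have hBAfin : μ (B \ A) ≠ ∞ := ((measure_mono Set.diff_subset).trans_lt hBf.lt_top).ne
  have hμ : μ (A ∆ B) = μ (A \ B) + μ (B \ A) := by
    rw [Set.symmDiff_def]
    exact measure_union (disjoint_sdiff_sdiff) (hBm.diff hAm)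
  rw [hsplit, hμ, ENNReal.toReal_add hABfin hBAfin]
  calc ‖(∫ g in A \ B, f g ∂μ) - ∫ g in B \ A, f g ∂μ‖
      ≤ ‖∫ g in A \ B, f g ∂μ‖ + ‖∫ g in B \ A, f g ∂μ‖ := norm_sub_le _ _
    _ ≤ c * (μ (A \ B)).toReal + c * (μ (B \ A)).toReal :=
        add_le_add (norm_setIntegral_le_of_norm_le_const_ae hABfin.lt_top hbdAB)
          (norm_setIntegral_le_of_norm_le_const_ae hBAfin.lt_top hbdBA)
    _ = c * ((μ (A \ B)).toReal + (μ (B \ A)).toReal) := by ring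

/-- Two vectors agreeing under all continuous functionals coincide. -/
private lemma dual_sep {E : Type} [NormedAddCommGroup E] [NormedSpace ℝ E] {a b : E}
    (h : ∀ y : StrongDual ℝ E, y a = y b) : a = b := by
  have h0 : ∀ y : StrongDual ℝ E, y (a - b) = 0 := fun y => by
    rw [map_sub, h y, sub_self]
  have := NormedSpace.eq_zero_of_forall_dual_eq_zero ℝ h0
  exact sub_eq_zero.1 this

end AuxMeasureLemmas

/-- **Abstract mean ergodic theorem for amenable groups** (Theorem 2.1 of the paper).
Let `G` be an amenable group and `{T_g}_{g∈G}` a family of continuous linear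
operators of a reflexive Banach space `E` into itself with `T_g T_h = T_{hg}`, weakly
Borel measurable in `g`, and a.e. uniformly bounded by `β`.  Let `A(K,x)` denote the
Pettis integral `(1/|K|) ∫_K T_g x dg`.  Set `F = {x : T_g x = x ∀g}` and `N` the
closed span of `{x − T_g x}`.  Then `E = F ⊕ N`, and along every Følner net
`{F_θ}` in `G`, `A(F_θ, x) → P(x)` in norm for every `x ∈ E`, where `P` is the
projection of `E = F ⊕ N` onto `F` along `N`, with `‖P‖ ≤ β`. -/
theorem abstract_mean_ergodic_theorem
    {G : Type} [Group G] [TopologicalSpace G] [IsTopologicalGroup G] [LocallyCompactSpace G]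
    [T2Space G] [MeasurableSpace G] [BorelSpace G]
    (μG : Measure G) [μG.IsHaarMeasure] (hAmenable : Nonempty (FolnerNet μG))
    {E : Type} [NormedAddCommGroup E] [NormedSpace ℝ E] [CompleteSpace E]
    (hrefl : Function.Surjective (NormedSpace.inclusionInDoubleDual ℝ E))
    (T : G → E →L[ℝ] E)
    -- (1) T_g T_h = T_{hg}
    (hmul : ∀ (g h : G) (x : E), T g (T h x) = T (h * g) x)
    -- (2) weak Borel measurability
    (hmeas : ∀ (x : E) (y : StrongDual ℝ E), Measurable fun g => y (T g x))
    -- (3) a.e. uniform boundedness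
    (β : ℝ) (hbdd : ∀ᵐ g ∂μG, ‖T g‖ ≤ β)
    -- the Pettis integral averages A(K, x)
    (A : Set G → E → E)
    (hA : ∀ K : Set G, IsCompact K → 0 < μG K → ∀ (x : E) (y : StrongDual ℝ E),
      y (A K x) = (μG K).toReal⁻¹ * ∫ g in K, y (T g x) ∂μG) :
    -- E = F ⊕ N
    ((∀ x : E, (∀ g : G, T g x = x) →
        x ∈ closure (Submodule.span ℝ {y : E | ∃ (z : E) (g : G), y = z - T g z} : Set E) →
        x = 0) ∧
      (∀ x : E, ∃ a b : E, (∀ g : G, T g a = a) ∧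
        b ∈ closure (Submodule.span ℝ {y : E | ∃ (z : E) (g : G), y = z - T g z} : Set E) ∧
        x = a + b)) ∧
    -- the projection P onto F along N satisfies ‖P‖ ≤ β and is the Moore–Smith limit
    -- of the averages along every Følner net
    ∃ P : E → E,
      (∀ x : E, (∀ g : G, T g (P x) = P x) ∧
        (x - P x) ∈ closure
          (Submodule.span ℝ {y : E | ∃ (z : E) (g : G), y = z - T g z} : Set E)) ∧
      (∀ c : ℝ, ∀ x y : E, P (c • x + y) = c • P x + P y) ∧
      (∀ x : E, ‖P x‖ ≤ β * ‖x‖) ∧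
      ∀ (Θ : Type) [Preorder Θ] [Nonempty Θ] [IsDirected Θ (· ≤ ·)] (F : Θ → Set G),
        IsFolnerNet μG F → ∀ x : E,
          Tendsto (fun θ => A (F θ) x) atTop (𝓝 (P x)) := by
  classical
  have hGne : Nonempty G := ⟨1⟩
  set gens : Set E := {y : E | ∃ (z : E) (g : G), y = z - T g z} with hgens
  -- ## the exceptional null set for the operator bound
  set Zb : Set G := toMeasurable μG {g : G | ¬ ‖T g‖ ≤ β} with hZbdef
  have hZbm : MeasurableSet Zb := measurableSet_toMeasurable _ _
  have hZb0 : μG Zb = 0 := by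
    rw [hZbdef, measure_toMeasurable]
    exact hbdd
  have hgood : ∀ g : G, g ∉ Zb → ‖T g‖ ≤ β := by
    intro g hg
    by_contra h
    exact hg (subset_toMeasurable _ _ h)
  have haeZb : ∀ᵐ g ∂μG, g ∉ Zb := by
    rw [ae_iff]
    simpa using hZb0
  -- ## β is nonnegative
  have hβ0 : 0 ≤ β := by
    have huniv : 0 < μG (Set.univ : Set G) := isOpen_univ.measure_pos μG Set.univ_nonempty
    have hne : μG Zbᶜ ≠ 0 := by
      intro h0
      have hle : μG (Set.univ : Set G) ≤ μG Zb + μG Zbᶜ := by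
        rw [← Set.union_compl_self Zb]
        exact measure_union_le _ _
      rw [hZb0, h0, add_zero] at hle
      exact absurd (le_antisymm hle (zero_le ..)) huniv.ne'
    obtain ⟨g, hg⟩ := MeasureTheory.nonempty_of_measure_ne_zero hne
    exact le_trans (norm_nonneg _) (hgood g hg)
  -- ## matrix coefficient bounds
  have coeff : ∀ (x : E) (y : StrongDual ℝ E) (g : G), ‖T g‖ ≤ β → ‖y (T g x)‖ ≤ β * ‖x‖ * ‖y‖ := by
    intro x y g hg
    have h1 : ‖y (T g x)‖ ≤ ‖y‖ * ‖T g x‖ := y.le_opNorm _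
    have h2 : ‖T g x‖ ≤ ‖T g‖ * ‖x‖ := (T g).le_opNorm _
    calc ‖y (T g x)‖ ≤ ‖y‖ * ‖T g x‖ := h1
      _ ≤ ‖y‖ * (‖T g‖ * ‖x‖) := mul_le_mul_of_nonneg_left h2 (norm_nonneg y)
      _ ≤ ‖y‖ * (β * ‖x‖) := mul_le_mul_of_nonneg_left
          (mul_le_mul_of_nonneg_right hg (norm_nonneg x)) (norm_nonneg y)
      _ = β * ‖x‖ * ‖y‖ := by ring
  have aeφ : ∀ (x : E) (y : StrongDual ℝ E) (K : Set G),
      ∀ᵐ g ∂μG.restrict K, ‖y (T g x)‖ ≤ β * ‖x‖ * ‖y‖ := by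
    intro x y K
    apply ae_restrict_of_ae
    exact haeZb.mono fun g hg => coeff x y g (hgood g hg)
  have aeφL : ∀ (x : E) (y : StrongDual ℝ E) (h : G) (K : Set G),
      ∀ᵐ g ∂μG.restrict K, ‖y (T (h * g) x)‖ ≤ β * ‖x‖ * ‖y‖ := by
    intro x y h K
    apply ae_restrict_of_ae
    have h0 : μG ((fun g => h * g) ⁻¹' Zb) = 0 := by
      rw [measure_preimage_mul]
      exact hZb0
    rw [ae_iff]
    refine le_antisymm (le_trans (measure_mono ?_) h0.le) (zero_le ..)
    intro g hg
    simp only [Set.mem_setOf_eq] at hg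
    have hb : ¬ ‖T (h * g)‖ ≤ β := fun hb => hg (coeff x y (h * g) hb)
    exact subset_toMeasurable _ _ hb
  have aeψ : ∀ (x : E) (y : StrongDual ℝ E) {K : Set G}, IsCompact K →
      ∀ᵐ g ∂μG.restrict K, ‖y (T g⁻¹ x)‖ ≤ β * ‖x‖ * ‖y‖ := by
    intro x y K hK
    have hnull : μG.restrict K Zb⁻¹ = 0 := by
      rw [Measure.restrict_apply hZbm.inv]
      exact haar_inv_null μG hZbm hZb0 hK
    rw [ae_iff]
    refine le_antisymm (le_trans (measure_mono ?_) hnull.le) (zero_le ..)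
    intro g hg
    simp only [Set.mem_setOf_eq] at hg
    have hb : ¬ ‖T g⁻¹‖ ≤ β := fun hb => hg (coeff x y g⁻¹ hb)
    exact Set.mem_inv.2 (subset_toMeasurable _ _ hb)
  have measψ : ∀ (x : E) (y : StrongDual ℝ E), Measurable fun g : G => y (T g⁻¹ x) :=
    fun x y => (hmeas x y).comp measurable_inv
  have intφ : ∀ (x : E) (y : StrongDual ℝ E) {K : Set G}, IsCompact K →
      IntegrableOn (fun g => y (T g x)) K μG := fun x y K hK =>
    Measure.integrableOn_of_bounded hK.measure_lt_top.ne
      (hmeas x y).aestronglyMeasurable (aeφ x y K)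
  have intφL : ∀ (x : E) (y : StrongDual ℝ E) (h : G) {K : Set G}, IsCompact K →
      IntegrableOn (fun g => y (T (h * g) x)) K μG := fun x y h K hK =>
    Measure.integrableOn_of_bounded hK.measure_lt_top.ne
      ((hmeas x y).comp (measurable_const_mul h)).aestronglyMeasurable (aeφL x y h K)
  have intψ : ∀ (x : E) (y : StrongDual ℝ E) {K : Set G}, IsCompact K →
      IntegrableOn (fun g => y (T g⁻¹ x)) K μG := fun x y K hK =>
    Measure.integrableOn_of_bounded hK.measure_lt_top.ne
      (measψ x y).aestronglyMeasurable (aeψ x y hK)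
  -- ## the basic shift estimate
  have shift : ∀ {K : Set G}, IsCompact K → 0 < μG K → ∀ (h : G) (f : G → ℝ) {c : ℝ},
      Measurable f → (∀ᵐ g ∂μG.restrict ((h • K) ∪ K), ‖f g‖ ≤ c) →
      ‖((μG K).toReal⁻¹ * ∫ g in K, f (h * g) ∂μG)
        - (μG K).toReal⁻¹ * ∫ g in K, f g ∂μG‖
        ≤ c * ((μG ((h • K) ∆ K)).toReal / (μG K).toReal) := by
    intro K hK hKpos h f c hf hbd
    have hKm : MeasurableSet K := hK.measurableSet
    have hhKm : MeasurableSet (h • K) := hKm.const_smul h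
    have htpos : 0 < (μG K).toReal := ENNReal.toReal_pos hKpos.ne' hK.measure_lt_top.ne
    rw [setIntegral_translate μG hKm f h, ← mul_sub, norm_mul]
    have hdiff : ‖(∫ g in h • K, f g ∂μG) - ∫ g in K, f g ∂μG‖
        ≤ c * (μG ((h • K) ∆ K)).toReal :=
      abs_setIntegral_sub_le μG hhKm hKm ((hK.smul h).measure_lt_top.ne)
        hK.measure_lt_top.ne hf hbd
    calc ‖(μG K).toReal⁻¹‖ * ‖(∫ g in h • K, f g ∂μG) - ∫ g in K, f g ∂μG‖
        ≤ (μG K).toReal⁻¹ * (c * (μG ((h • K) ∆ K)).toReal) := by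
          rw [Real.norm_eq_abs, abs_of_nonneg (by positivity)]
          exact mul_le_mul_of_nonneg_left hdiff (by positivity)
      _ = c * ((μG ((h • K) ∆ K)).toReal / (μG K).toReal) := by
          rw [div_eq_mul_inv]; ring
  -- ## basic properties of the averages A K ·
  have Abound : ∀ {K : Set G}, IsCompact K → 0 < μG K → ∀ v : E, ‖A K v‖ ≤ β * ‖v‖ := by
    intro K hK hKpos v
    have htpos : 0 < (μG K).toReal := ENNReal.toReal_pos hKpos.ne' hK.measure_lt_top.ne
    apply NormedSpace.norm_le_dual_bound ℝ _ (by positivity)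
    intro y
    rw [hA K hK hKpos v y]
    have h1 : ‖∫ g in K, y (T g v) ∂μG‖ ≤ (β * ‖v‖ * ‖y‖) * (μG K).toReal :=
      norm_setIntegral_le_of_norm_le_const_ae hK.measure_lt_top (aeφ v y K)
    rw [norm_mul, Real.norm_eq_abs ((μG K).toReal⁻¹), abs_of_nonneg (by positivity)]
    calc (μG K).toReal⁻¹ * ‖∫ g in K, y (T g v) ∂μG‖
        ≤ (μG K).toReal⁻¹ * ((β * ‖v‖ * ‖y‖) * (μG K).toReal) :=
          mul_le_mul_of_nonneg_left h1 (by positivity)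
      _ = β * ‖v‖ * ‖y‖ := by field_simp
  have Aadd : ∀ {K : Set G}, IsCompact K → 0 < μG K → ∀ u v : E,
      A K (u + v) = A K u + A K v := by
    intro K hK hKpos u v
    apply dual_sep; intro y
    rw [map_add, hA K hK hKpos, hA K hK hKpos, hA K hK hKpos]
    simp only [map_add]
    rw [integral_add (intφ u y hK) (intφ v y hK)]
    ring
  have Asub : ∀ {K : Set G}, IsCompact K → 0 < μG K → ∀ u v : E,
      A K (u - v) = A K u - A K v := by
    intro K hK hKpos u v
    apply dual_sep; intro y
    rw [map_sub, hA K hK hKpos, hA K hK hKpos, hA K hK hKpos]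
    simp only [map_sub]
    rw [integral_sub (intφ u y hK) (intφ v y hK)]
    ring
  have Asmul : ∀ {K : Set G}, IsCompact K → 0 < μG K → ∀ (r : ℝ) (u : E),
      A K (r • u) = r • A K u := by
    intro K hK hKpos r u
    apply dual_sep; intro y
    rw [hA K hK hKpos]
    simp only [_root_.map_smul, smul_eq_mul]
    rw [integral_const_mul, hA K hK hKpos]
    ring
  have Afix : ∀ {K : Set G}, IsCompact K → 0 < μG K → ∀ v : E,
      (∀ g : G, T g v = v) → A K v = v := by
    intro K hK hKpos v hv
    have htpos : 0 < (μG K).toReal := ENNReal.toReal_pos hKpos.ne' hK.measure_lt_top.ne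
    apply dual_sep; intro y
    rw [hA K hK hKpos]
    simp only [hv]
    rw [setIntegral_const, smul_eq_mul]
    field_simp
    rfl
  -- ## averages of elements of N̄ tend to zero along any Følner net
  have convN : ∀ (Θ' : Type) [Preorder Θ'] [Nonempty Θ'] [IsDirected Θ' (· ≤ ·)]
      (F' : Θ' → Set G), IsFolnerNet μG F' →
      ∀ v : E, v ∈ closure (Submodule.span ℝ gens : Set E) →
      Tendsto (fun θ => A (F' θ) v) atTop (𝓝 0) := by
    intro Θ' _ _ _ F' hF'
    obtain ⟨hcpt, hpos, hconv⟩ := hF'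
    have gen : ∀ (z : E) (h : G), Tendsto (fun θ => A (F' θ) (z - T h z)) atTop (𝓝 0) := by
      intro z h
      apply squeeze_zero_norm (a := fun θ =>
        β * ‖z‖ * ((μG ((h • F' θ) ∆ (F' θ))).toReal / (μG (F' θ)).toReal))
      · intro θ
        apply NormedSpace.norm_le_dual_bound ℝ _ (by positivity)
        intro y
        have e1 : y (A (F' θ) (z - T h z)) =
            ((μG (F' θ)).toReal⁻¹ * ∫ g in F' θ, y (T g z) ∂μG)
            - ((μG (F' θ)).toReal⁻¹ * ∫ g in F' θ, (fun u => y (T u z)) (h * g) ∂μG) := by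
          rw [hA _ (hcpt θ) (hpos θ)]
          simp only [map_sub, hmul]
          rw [integral_sub (intφ z y (hcpt θ)) (intφL z y h (hcpt θ))]
          ring
        rw [e1, ← norm_neg, neg_sub]
        have h2 := shift (hcpt θ) (hpos θ) h (fun u => y (T u z)) (hmeas z y)
          (aeφ z y ((h • F' θ) ∪ F' θ))
        calc ‖((μG (F' θ)).toReal⁻¹ * ∫ g in F' θ, (fun u => y (T u z)) (h * g) ∂μG)
              - (μG (F' θ)).toReal⁻¹ * ∫ g in F' θ, y (T g z) ∂μG‖
            ≤ (β * ‖z‖ * ‖y‖) * ((μG ((h • F' θ) ∆ (F' θ))).toReal / (μG (F' θ)).toReal) := h2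
          _ = (β * ‖z‖ * ((μG ((h • F' θ) ∆ (F' θ))).toReal / (μG (F' θ)).toReal)) * ‖y‖ := by
              ring
      · have := (hconv h).const_mul (β * ‖z‖)
        simpa using this
    intro v hv
    -- first: elements of the span
    have span_case : ∀ v ∈ Submodule.span ℝ gens,
        Tendsto (fun θ => A (F' θ) v) atTop (𝓝 0) := by
      intro v hv
      induction hv using Submodule.span_induction with
      | mem w hw =>
          obtain ⟨z, g, rfl⟩ := hw
          exact gen z g
      | zero =>
          have hfun : (fun θ => A (F' θ) (0 : E)) = fun _ => (0 : E) := by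
            funext θ
            have := Asmul (hcpt θ) (hpos θ) 0 0
            simpa using this
          rw [hfun]
          exact tendsto_const_nhds
      | add u w hu hw ihu ihw =>
          have hfun : (fun θ => A (F' θ) (u + w)) = fun θ => A (F' θ) u + A (F' θ) w :=
            funext fun θ => Aadd (hcpt θ) (hpos θ) u w
          rw [hfun]
          simpa using ihu.add ihw
      | smul r u hu ihu =>
          have hfun : (fun θ => A (F' θ) (r • u)) = fun θ => r • A (F' θ) u :=
            funext fun θ => Asmul (hcpt θ) (hpos θ) r u
          rw [hfun]
          simpa using ihu.const_smul r
    -- then: closure, by an ε/2 argument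
    rw [NormedAddCommGroup.tendsto_nhds_zero]
    intro ε εpos
    obtain ⟨s, hs_mem, hs_close⟩ := Metric.mem_closure_iff.1 hv (ε / (2 * (β + 1)))
      (by positivity)
    have h1 := (NormedAddCommGroup.tendsto_nhds_zero.1 (span_case s hs_mem)) (ε / 2)
      (by positivity)
    filter_upwards [h1] with θ hθ
    have hAv : A (F' θ) v = A (F' θ) (v - s) + A (F' θ) s := by
      rw [← Aadd (hcpt θ) (hpos θ), sub_add_cancel]
    have hvs : ‖v - s‖ < ε / (2 * (β + 1)) := by
      rw [← dist_eq_norm]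
      exact hs_close
    have hb := Abound (hcpt θ) (hpos θ) (v - s)
    calc ‖A (F' θ) v‖ ≤ ‖A (F' θ) (v - s)‖ + ‖A (F' θ) s‖ := by
          rw [hAv]; exact norm_add_le _ _
      _ < ε := by
          have hc1 : (0:ℝ) < 2 * (β + 1) := by positivity
          have h3 : β * (ε / (2 * (β + 1))) < ε / 2 := by
            rw [mul_div_assoc', div_lt_div_iff₀ hc1 two_pos]
            nlinarith [mul_nonneg hβ0 εpos.le]
          have h4 : β * ‖v - s‖ ≤ β * (ε / (2 * (β + 1))) :=
            mul_le_mul_of_nonneg_left hvs.le hβ0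
          linarith
  -- ## the canonical Følner net and an ultrafilter refining its order
  obtain ⟨N₀⟩ := hAmenable
  obtain ⟨hcpt₀, hpos₀, hconv₀⟩ := N₀.isFolner
  haveI : (atTop : Filter N₀.ι).NeBot := atTop_neBot
  set U : Ultrafilter N₀.ι := Ultrafilter.of atTop with hUdef
  have hUle : (U : Filter N₀.ι) ≤ atTop := Ultrafilter.of_le _
  have tpos₀ : ∀ θ, 0 < (μG (N₀.F θ)).toReal := fun θ =>
    ENNReal.toReal_pos (hpos₀ θ).ne' (hcpt₀ θ).measure_lt_top.ne
  -- the averaged matrix coefficients (with inverted argument)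
  set avψ : E → StrongDual ℝ E → N₀.ι → ℝ := fun x y θ =>
    (μG (N₀.F θ)).toReal⁻¹ * ∫ g in N₀.F θ, y (T g⁻¹ x) ∂μG with havψ
  have avψ_abs : ∀ (x : E) (y : StrongDual ℝ E) (θ : N₀.ι), |avψ x y θ| ≤ β * ‖x‖ * ‖y‖ := by
    intro x y θ
    rw [havψ]
    simp only
    rw [abs_mul, abs_of_nonneg (le_of_lt (inv_pos.2 (tpos₀ θ)))]
    have h1 : ‖∫ g in N₀.F θ, y (T g⁻¹ x) ∂μG‖ ≤ (β * ‖x‖ * ‖y‖) * (μG (N₀.F θ)).toReal :=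
      norm_setIntegral_le_of_norm_le_const_ae (hcpt₀ θ).measure_lt_top (aeψ x y (hcpt₀ θ))
    rw [Real.norm_eq_abs] at h1
    calc (μG (N₀.F θ)).toReal⁻¹ * |∫ g in N₀.F θ, y (T g⁻¹ x) ∂μG|
        ≤ (μG (N₀.F θ)).toReal⁻¹ * ((β * ‖x‖ * ‖y‖) * (μG (N₀.F θ)).toReal) :=
          mul_le_mul_of_nonneg_left h1 (by positivity)
      _ = β * ‖x‖ * ‖y‖ := by
          field_simp
          exact (div_eq_iff (tpos₀ θ).ne').2 (by ring)
  -- existence of ultrafilter limits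
  have key : ∀ (x : E) (y : StrongDual ℝ E), ∃ L : ℝ, |L| ≤ β * ‖x‖ * ‖y‖ ∧
      Tendsto (avψ x y) (U : Filter N₀.ι) (𝓝 L) := by
    intro x y
    have hmem : ∀ θ, avψ x y θ ∈ Set.Icc (-(β * ‖x‖ * ‖y‖)) (β * ‖x‖ * ‖y‖) := fun θ =>
      abs_le.1 (avψ_abs x y θ)
    obtain ⟨L, hL, hle⟩ := (isCompact_Icc (a := -(β * ‖x‖ * ‖y‖))
        (b := β * ‖x‖ * ‖y‖)).ultrafilter_le_nhds (U.map (avψ x y)) (by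
      rw [Ultrafilter.coe_map]
      exact Filter.le_principal_iff.2 (Filter.mem_map.2 (Filter.univ_mem' hmem)))
    rw [Ultrafilter.coe_map] at hle
    exact ⟨L, abs_le.2 ⟨hL.1, hL.2⟩, hle⟩
  set Lam : E → StrongDual ℝ E → ℝ := fun x y => (key x y).choose with hLamdef
  have hLam_b : ∀ x y, |Lam x y| ≤ β * ‖x‖ * ‖y‖ := fun x y => (key x y).choose_spec.1
  have hLam_t : ∀ x y, Tendsto (avψ x y) (U : Filter N₀.ι) (𝓝 (Lam x y)) :=
    fun x y => (key x y).choose_spec.2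
  have uniq : ∀ {f : N₀.ι → ℝ} {L₁ L₂ : ℝ}, Tendsto f (U : Filter N₀.ι) (𝓝 L₁) →
      Tendsto f (U : Filter N₀.ι) (𝓝 L₂) → L₁ = L₂ := fun h1 h2 =>
    tendsto_nhds_unique h1 h2
  -- ## invariance of the limit under composing the functional with T h
  have Lam_fix : ∀ (x : E) (y : StrongDual ℝ E) (h : G), Lam x (y.comp (T h)) = Lam x y := by
    intro x y h
    -- the net for y ∘ T h is the left-translated net
    have hfun : avψ x (y.comp (T h)) = fun θ =>
        (μG (N₀.F θ)).toReal⁻¹ * ∫ g in N₀.F θ, (fun u => y (T u⁻¹ x)) (h⁻¹ * g) ∂μG := by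
      funext θ
      rw [havψ]
      simp only
      congr 1
      apply setIntegral_congr_fun (hcpt₀ θ).measurableSet
      intro g _
      simp only [ContinuousLinearMap.comp_apply]
      rw [hmul h g⁻¹ x]
      congr 1
      rw [mul_inv_rev, inv_inv]
    -- Følner comparison
    have hdiff : Tendsto (fun θ =>
        ((μG (N₀.F θ)).toReal⁻¹ * ∫ g in N₀.F θ, (fun u => y (T u⁻¹ x)) (h⁻¹ * g) ∂μG)
          - avψ x y θ) atTop (𝓝 0) := by
      apply squeeze_zero_norm (a := fun θ =>
        (β * ‖x‖ * ‖y‖) * ((μG ((h⁻¹ • N₀.F θ) ∆ (N₀.F θ))).toReal / (μG (N₀.F θ)).toReal))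
      · intro θ
        exact shift (hcpt₀ θ) (hpos₀ θ) h⁻¹ (fun u => y (T u⁻¹ x)) (measψ x y)
          (aeψ x y (((hcpt₀ θ).smul h⁻¹).union (hcpt₀ θ)))
      · have := (hconv₀ h⁻¹).const_mul (β * ‖x‖ * ‖y‖)
        simpa using this
    have ht2 : Tendsto (fun θ =>
        (μG (N₀.F θ)).toReal⁻¹ * ∫ g in N₀.F θ, (fun u => y (T u⁻¹ x)) (h⁻¹ * g) ∂μG)
        (U : Filter N₀.ι) (𝓝 (Lam x y)) := by
      have hd : Tendsto (fun θ =>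
          ((μG (N₀.F θ)).toReal⁻¹ * ∫ g in N₀.F θ, (fun u => y (T u⁻¹ x)) (h⁻¹ * g) ∂μG)
            - avψ x y θ) (U : Filter N₀.ι) (𝓝 0) := hdiff.mono_left hUle
      have := hd.add (hLam_t x y)
      simpa using this
    refine uniq (hLam_t x (y.comp (T h))) ?_
    rw [hfun]
    exact ht2
  -- ## linearity of the limit
  have Lam_add_y : ∀ x y₁ y₂, Lam x (y₁ + y₂) = Lam x y₁ + Lam x y₂ := by
    intro x y₁ y₂
    have hfun : avψ x (y₁ + y₂) = fun θ => avψ x y₁ θ + avψ x y₂ θ := by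
      funext θ
      rw [havψ]
      simp only [ContinuousLinearMap.add_apply]
      rw [integral_add (intψ x y₁ (hcpt₀ θ)) (intψ x y₂ (hcpt₀ θ))]
      ring
    refine uniq (hLam_t x (y₁ + y₂)) ?_
    rw [hfun]
    exact (hLam_t x y₁).add (hLam_t x y₂)
  have Lam_smul_y : ∀ (x : E) (r : ℝ) (y : StrongDual ℝ E), Lam x (r • y) = r * Lam x y := by
    intro x r y
    have hfun : avψ x (r • y) = fun θ => r * avψ x y θ := by
      funext θ
      rw [havψ]
      simp only [ContinuousLinearMap.smul_apply, smul_eq_mul]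
      rw [integral_const_mul]
      ring
    refine uniq (hLam_t x (r • y)) ?_
    rw [hfun]
    exact (hLam_t x y).const_mul r
  have Lam_lin_x : ∀ (c : ℝ) (x x' : E) (y : StrongDual ℝ E),
      Lam (c • x + x') y = c * Lam x y + Lam x' y := by
    intro c x x' y
    have hfun : avψ (c • x + x') y = fun θ => c * avψ x y θ + avψ x' y θ := by
      funext θ
      rw [havψ]
      simp only [_root_.map_add, _root_.map_smul, smul_eq_mul]
      rw [integral_add ((intψ x y (hcpt₀ θ)).const_mul c) (intψ x' y (hcpt₀ θ)),
        integral_const_mul]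
      ring
    refine uniq (hLam_t (c • x + x') y) ?_
    rw [hfun]
    exact ((hLam_t x y).const_mul c).add (hLam_t x' y)
  -- constants
  have Lam_const : ∀ (x : E) (y : StrongDual ℝ E), (∀ g : G, y (T g x) = y x) → Lam x y = y x := by
    intro x y hy
    refine uniq (hLam_t x y) ?_
    have hfun : avψ x y = fun _ => y x := by
      funext θ
      rw [havψ]
      simp only [hy]
      rw [setIntegral_const, smul_eq_mul]
      field_simp
      rw [mul_comm]
      exact mul_div_cancel_right₀ _ (tpos₀ θ).ne'
    rw [hfun]
    exact tendsto_const_nhds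
  -- ## the projection P via reflexivity
  set Lamx : E → StrongDual ℝ (StrongDual ℝ E) := fun x =>
    LinearMap.mkContinuous
      { toFun := fun y => Lam x y
        map_add' := Lam_add_y x
        map_smul' := fun r y => by simpa using Lam_smul_y x r y }
      (β * ‖x‖)
      (fun y => by
        rw [Real.norm_eq_abs]
        exact hLam_b x y) with hLamx
  set P : E → E := fun x => (hrefl (Lamx x)).choose with hPdef
  have hP : ∀ (x : E) (y : StrongDual ℝ E), y (P x) = Lam x y := by
    intro x y
    have h1 : NormedSpace.inclusionInDoubleDual ℝ E (P x) = Lamx x :=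
      (hrefl (Lamx x)).choose_spec
    have h2 := congrArg (fun Φ : StrongDual ℝ (StrongDual ℝ E) => Φ y) h1
    simpa [NormedSpace.dual_def, hLamx, LinearMap.mkContinuous_apply] using h2
  have Pfix : ∀ (h : G) (x : E), T h (P x) = P x := by
    intro h x
    apply dual_sep; intro y
    have h1 : y (T h (P x)) = (y.comp (T h)) (P x) := rfl
    rw [h1, hP x (y.comp (T h)), Lam_fix x y h, ← hP x y]
  have Pann : ∀ (y : StrongDual ℝ E), (∀ (z : E) (g : G), y (T g z) = y z) →
      ∀ x : E, y (P x) = y x := by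
    intro y hy x
    rw [hP, Lam_const x y (fun g => hy x g)]
  have Plin : ∀ (c : ℝ) (x x' : E), P (c • x + x') = c • P x + P x' := by
    intro c x x'
    apply dual_sep; intro y
    rw [hP, Lam_lin_x c x x' y, map_add, _root_.map_smul, smul_eq_mul, hP, hP]
  have Pbound : ∀ x : E, ‖P x‖ ≤ β * ‖x‖ := by
    intro x
    apply NormedSpace.norm_le_dual_bound ℝ _ (by positivity)
    intro y
    rw [hP, Real.norm_eq_abs]
    exact hLam_b x y
  have PmemN : ∀ x : E, x - P x ∈ closure (Submodule.span ℝ gens : Set E) := by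
    intro x
    by_contra hmem
    obtain ⟨f, u, hfs, hfx⟩ := geometric_hahn_banach_closed_point
      (s := closure (Submodule.span ℝ gens : Set E))
      ((Submodule.span ℝ gens).convex.closure) isClosed_closure hmem
    have hf0 : ∀ a ∈ (Submodule.span ℝ gens : Set E), f a = 0 := by
      intro a ha
      by_contra hfa
      have hsm : ((u + 1) / f a) • a ∈ (Submodule.span ℝ gens : Set E) :=
        Submodule.smul_mem _ _ ha
      have := hfs _ (subset_closure hsm)
      rw [_root_.map_smul, smul_eq_mul, div_mul_cancel₀ _ hfa] at this
      linarith
    have hu0 : (0 : ℝ) < u := by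
      have h0 := hfs 0 (subset_closure (Submodule.zero_mem _))
      simpa using h0
    have hann : ∀ (z : E) (g : G), f (T g z) = f z := by
      intro z g
      have h1 : f (z - T g z) = 0 := hf0 _ (Submodule.subset_span ⟨z, g, rfl⟩)
      rw [map_sub] at h1
      linarith
    have h2 : f (x - P x) = 0 := by
      rw [map_sub, Pann f hann x, sub_self]
    rw [h2] at hfx
    linarith
  -- ## assembling everything
  refine ⟨⟨?_, ?_⟩, P, fun x => ⟨fun g => Pfix g x, PmemN x⟩, Plin, Pbound, ?_⟩
  · -- F ∩ N̄ = 0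
    intro x hfix hmem
    have h1 : Tendsto (fun θ : N₀.ι => A (N₀.F θ) x) atTop (𝓝 0) :=
      convN _ N₀.F ⟨hcpt₀, hpos₀, hconv₀⟩ x hmem
    have h2 : (fun θ : N₀.ι => A (N₀.F θ) x) = fun _ => x :=
      funext fun θ => Afix (hcpt₀ θ) (hpos₀ θ) x hfix
    rw [h2] at h1
    exact tendsto_nhds_unique tendsto_const_nhds h1
  · -- E = F + N̄
    intro x
    exact ⟨P x, x - P x, fun g => Pfix g x, PmemN x, by abel⟩
  · -- norm convergence of the averages along any Følner net
    intro Θ' _ _ _ F' hF' x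
    have hcpt := hF'.1
    have hpos := hF'.2.1
    rw [← tendsto_sub_nhds_zero_iff]
    have he : (fun θ => A (F' θ) x - P x) = fun θ => A (F' θ) (x - P x) := by
      funext θ
      rw [Asub (hcpt θ) (hpos θ), Afix (hcpt θ) (hpos θ) (P x) (fun g => Pfix g x)]
    rw [he]
    exact convN Θ' F' hF' (x - P x) (PmemN x)
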